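/- arXiv:1404.1958 — 2 statements merged into one kernel-verified Lean document; each statement's English description precedes it below -/
import Mathlib

section
/- Fix integers E ≥ 0 and t ≥ 0 and a finite index set P. For each i ∈ P let t_i ∈ ℕ be its arrival time, let x_i : ℕ → ℤ be its state trajectory with 0 ≤ x_i(s) ≤ E for all s, and set S_i := x_i(t_i). Define a_i(s) := u(s − t_i), the aggregate load L(s) := Σ_{i∈P} (x_i(s+1) − x_i(s))·a_i(s), the occupancies n_x(s) := Σ_{i∈P} [x_i(s) = x]·a_i(s) for x = 0,…,E, and the state-arrival processes a_x(s) := Σ_{i∈P} [S_i = x]·a_i(s) for x = 0,…,E. Then L(t) = Σ_{x=0}^{E} [ (Σ_{x'=x}^{E} ∂n_{x'}(t)) − (x+1)·∂a_x(t) ]. -/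
lemma aux1 (E : ℕ) (z : ℤ) (h0 : 0 ≤ z) (hE : z ≤ (E : ℤ)) :
    ∑ y ∈ Finset.range (E + 1), ∑ y' ∈ Finset.Icc y E,
      (if z = (y' : ℤ) then (1 : ℤ) else 0) = z + 1 := by
  lift z to ℕ using h0 with m
  have hm : m ≤ E := by exact_mod_cast hE
  have h1 : ∀ y, ∑ y' ∈ Finset.Icc y E, (if (m : ℤ) = (y' : ℤ) then (1 : ℤ) else 0)
      = if m ∈ Finset.Icc y E then (1 : ℤ) else 0 := by
    intro y
    rw [← Finset.sum_ite_eq (Finset.Icc y E) m (fun _ => (1 : ℤ))]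
    exact Finset.sum_congr rfl fun y' _ => by simp [Nat.cast_inj]
  simp only [h1, Finset.mem_Icc]
  have h2 : ∀ y ∈ Finset.range (E + 1),
      (if y ≤ m ∧ m ≤ E then (1 : ℤ) else 0) = if y ∈ Finset.range (m + 1) then 1 else 0 := by
    intro y hy
    simp only [Finset.mem_range]
    congr 1
    simp only [eq_iff_iff]
    omega
  rw [Finset.sum_congr rfl h2, Finset.sum_ite_mem]
  have h3 : Finset.range (E + 1) ∩ Finset.range (m + 1) = Finset.range (m + 1) := by
    ext k; simp only [Finset.mem_inter, Finset.mem_range]; omega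
  simp [h3]

lemma aux2 (E : ℕ) (z : ℤ) (h0 : 0 ≤ z) (hE : z ≤ (E : ℤ)) :
    ∑ y ∈ Finset.range (E + 1), ((y : ℤ) + 1) * (if z = (y : ℤ) then (1 : ℤ) else 0)
      = z + 1 := by
  lift z to ℕ using h0 with m
  have hm : m ≤ E := by exact_mod_cast hE
  rw [Finset.sum_eq_single m]
  · simp
  · intro b _ hb
    have : (m : ℤ) ≠ (b : ℤ) := by exact_mod_cast hb.symm
    simp [this]
  · intro h
    exact absurd (Finset.mem_range.mpr (by omega)) h

/-- Lemma 1: aggregate load of a population of ideal batteries in terms of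
bin occupancies `n` and state-arrival processes `ar`. -/
theorem stmt_0 {ι : Type*} (P : Finset ι) (E t : ℕ)
    (ti : ι → ℕ) (x : ι → ℕ → ℤ)
    (hx : ∀ i ∈ P, ∀ s : ℕ, 0 ≤ x i s ∧ x i s ≤ (E : ℤ))
    (S : ι → ℤ) (hS : ∀ i, S i = x i (ti i))
    (a : ι → ℕ → ℤ) (ha : ∀ i s, a i s = if ti i ≤ s then 1 else 0)
    (L : ℕ → ℤ) (hL : ∀ s, L s = ∑ i ∈ P, (x i (s + 1) - x i s) * a i s)
    (n : ℕ → ℕ → ℤ)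
    (hn : ∀ y s, n y s = ∑ i ∈ P, (if x i s = (y : ℤ) then 1 else 0) * a i s)
    (ar : ℕ → ℕ → ℤ)
    (har : ∀ y s, ar y s = ∑ i ∈ P, (if S i = (y : ℤ) then 1 else 0) * a i s) :
    L t = ∑ y ∈ Finset.range (E + 1),
      ((∑ y' ∈ Finset.Icc y E, (n y' (t + 1) - n y' t))
        - ((y : ℤ) + 1) * (ar y (t + 1) - ar y t)) := by
  -- per-y rewrite of the RHS into a sum over individuals
  have hy : ∀ y ∈ Finset.range (E + 1),
      ((∑ y' ∈ Finset.Icc y E, (n y' (t + 1) - n y' t))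
        - ((y : ℤ) + 1) * (ar y (t + 1) - ar y t))
      = ∑ i ∈ P,
        ((∑ y' ∈ Finset.Icc y E,
            ((if x i (t + 1) = (y' : ℤ) then (1:ℤ) else 0) * a i (t + 1)
              - (if x i t = (y' : ℤ) then (1:ℤ) else 0) * a i t))
          - ((y : ℤ) + 1) *
            ((if S i = (y : ℤ) then (1:ℤ) else 0) * a i (t + 1)
              - (if S i = (y : ℤ) then (1:ℤ) else 0) * a i t)) := by
    intro y _
    simp only [hn, har, ← Finset.sum_sub_distrib, Finset.mul_sum]
    rw [Finset.sum_comm, ← Finset.sum_sub_distrib]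
  rw [Finset.sum_congr rfl hy, Finset.sum_comm, hL]
  refine Finset.sum_congr rfl fun i hi => ?_
  -- per-individual identity
  have hAb := hx i hi (t + 1)
  have hBb := hx i hi t
  have hSb : 0 ≤ S i ∧ S i ≤ (E : ℤ) := (hS i) ▸ hx i hi (ti i)
  have e1 : ∀ y, (∑ y' ∈ Finset.Icc y E,
      ((if x i (t + 1) = (y' : ℤ) then (1:ℤ) else 0) * a i (t + 1)
        - (if x i t = (y' : ℤ) then (1:ℤ) else 0) * a i t))
      = (∑ y' ∈ Finset.Icc y E, (if x i (t + 1) = (y' : ℤ) then (1:ℤ) else 0)) * a i (t + 1)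
        - (∑ y' ∈ Finset.Icc y E, (if x i t = (y' : ℤ) then (1:ℤ) else 0)) * a i t := by
    intro y
    rw [Finset.sum_sub_distrib, Finset.sum_mul, Finset.sum_mul]
  calc (x i (t + 1) - x i t) * a i t
      = (x i (t+1) + 1) * a i (t+1) - (x i t + 1) * a i t
        - (S i + 1) * a i (t+1) + (S i + 1) * a i t := by
        rcases le_or_gt (ti i) t with h1 | h1
        · simp only [ha, if_pos h1, if_pos (by omega : ti i ≤ t + 1)]; ring
        by_cases h2 : ti i = t + 1
        · have hSx : S i = x i (t + 1) := by rw [hS, h2]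
          simp only [ha, if_pos (by omega : ti i ≤ t + 1),
            if_neg (by omega : ¬ ti i ≤ t), hSx]; ring
        · have hA : ¬ ti i ≤ t + 1 := by omega
          have hB : ¬ ti i ≤ t := by omega
          simp only [ha, if_neg hA, if_neg hB]; ring
    _ = _ := by
        rw [eq_comm]
        simp only [e1]
        rw [Finset.sum_sub_distrib]
        simp only [sub_mul, mul_sub, ← mul_assoc]
        rw [Finset.sum_sub_distrib, Finset.sum_sub_distrib, ← Finset.sum_mul,
          ← Finset.sum_mul, ← Finset.sum_mul, ← Finset.sum_mul,
          aux1 E (x i (t+1)) hAb.1 hAb.2, aux1 E (x i t) hBb.1 hBb.2,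
          aux2 E (S i) hSb.1 hSb.2]
        ring
end

section
/- Let t₀ ∈ ℤ, χ ∈ ℕ, and let ℓ : ℤ → ℝ be a finitely supported load profile. Then the set of load trajectories { L : ℤ → ℝ | there exists x : ℤ → {0,1} nondecreasing with x(t) ≤ u(t − t₀) and x(t) ≥ u(t − t₀ − χ) for all t, such that L(t) = Σ_{s∈ℤ} ℓ(s)·(x(t − s) − x(t − s − 1)) for all t } equals the set { L : ℤ → ℝ | there exists τ ∈ ℤ with t₀ ≤ τ ≤ t₀ + χ such that L(t) = ℓ(t − τ) for all t }. -/
/-- The discrete unit step: `ustep z = 1` if `z ≥ 0`, else `0`. -/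
def ustep (z : ℤ) : ℤ := if 0 ≤ z then 1 else 0

lemma key_sum (ℓ : ℤ → ℝ) (t τ : ℤ) :
    (∑ᶠ s : ℤ, ℓ s * ((ustep (t - s - τ) : ℝ) - (ustep (t - s - 1 - τ) : ℝ))) = ℓ (t - τ) := by
  rw [finsum_eq_single _ (t - τ)]
  · have h0 : t - (t - τ) - τ = 0 := by ring
    have h1 : t - (t - τ) - 1 - τ = -1 := by ring
    rw [h0, h1]
    simp [ustep]
  · intro s hs
    have h : ustep (t - s - τ) = ustep (t - s - 1 - τ) := by
      unfold ustep; split_ifs <;> omega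
    rw [h]; ring

/-- Equivalence of the integer-linear description (21) of a non-interruptible
deferrable load with its description as a time shift of the profile `ℓ`. -/
theorem stmt_5 (t₀ : ℤ) (χ : ℕ) (ℓ : ℤ → ℝ)
    (hℓ : (Function.support ℓ).Finite) :
    {L : ℤ → ℝ | ∃ x : ℤ → ℤ,
        (∀ t, x t = 0 ∨ x t = 1) ∧ Monotone x ∧
        (∀ t, x t ≤ ustep (t - t₀)) ∧
        (∀ t, ustep (t - t₀ - (χ : ℤ)) ≤ x t) ∧
        (∀ t, L t = ∑ᶠ s : ℤ, ℓ s * ((x (t - s) : ℝ) - (x (t - s - 1) : ℝ)))}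
      = {L : ℤ → ℝ | ∃ τ : ℤ, t₀ ≤ τ ∧ τ ≤ t₀ + (χ : ℤ) ∧
          ∀ t, L t = ℓ (t - τ)} := by
  classical
  ext L
  simp only [Set.mem_setOf_eq]
  constructor
  · rintro ⟨x, hx01, hmono, hub, hlb, hL⟩
    have hx1 : x (t₀ + χ) = 1 := by
      have h1 := hlb (t₀ + χ)
      have h2 : ustep (t₀ + χ - t₀ - χ) = 1 := by unfold ustep; split_ifs <;> omega
      rcases hx01 (t₀ + χ) with h | h <;> omega
    have hP : ∃ z, x z = 1 := ⟨t₀ + χ, hx1⟩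
    have hbdd : ∃ b : ℤ, ∀ z, x z = 1 → b ≤ z := by
      refine ⟨t₀, fun z hz => ?_⟩
      by_contra h
      have h1 := hub z
      have h2 : ustep (z - t₀) = 0 := by unfold ustep; split_ifs <;> omega
      omega
    obtain ⟨τ, hτ1, hτmin⟩ := Int.exists_least_of_bdd hbdd hP
    have hxeq : ∀ t, x t = ustep (t - τ) := by
      intro t
      unfold ustep
      split_ifs with h
      · have h1 := hmono (show τ ≤ t by omega)
        have h2 := hx01 t
        omega
      · rcases hx01 t with h0 | h1
        · exact h0
        · have := hτmin t h1; omega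
    refine ⟨τ, ?_, ?_, ?_⟩
    · have h1 := hub τ
      by_contra h
      have h2 : ustep (τ - t₀) = 0 := by unfold ustep; split_ifs <;> omega
      omega
    · have := hτmin (t₀ + χ) hx1
      omega
    · intro t
      rw [hL t, ← key_sum ℓ t τ]
      apply finsum_congr
      intro s
      rw [hxeq (t - s), hxeq (t - s - 1)]
  · rintro ⟨τ, hτ1, hτ2, hL⟩
    refine ⟨fun t => ustep (t - τ), ?_, ?_, ?_, ?_, ?_⟩
    · intro t
      show ustep (t - τ) = 0 ∨ ustep (t - τ) = 1
      unfold ustep; split_ifs <;> simp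
    · intro a b hab
      show ustep (a - τ) ≤ ustep (b - τ)
      unfold ustep; split_ifs <;> omega
    · intro t
      show ustep (t - τ) ≤ ustep (t - t₀)
      unfold ustep; split_ifs <;> omega
    · intro t
      show ustep (t - t₀ - (χ : ℤ)) ≤ ustep (t - τ)
      unfold ustep; split_ifs <;> omega
    · intro t
      rw [hL t, ← key_sum ℓ t τ]
end
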